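/- arXiv:2212.07534 — 2 statements merged into one kernel-verified Lean document; each statement's English description precedes it below -/
import Mathlib

section
/- Mean-square consensus of Algorithm 2: Suppose each ∇f_i is ν-Lipschitz and uniformly bounded (‖∇f_i(θ)‖ ≤ G for all θ), the weight matrix W is symmetric and doubly stochastic with η := ‖W − (1/m)𝟏𝟏ᵀ‖ < 1, and Σ_{k=0}^∞ (λ^k)² < ∞. Then for every agent i, lim_{k→∞} E[‖x_i^k − x̄^k‖²] = 0, where the expectation is taken over the Gaussian noise sequence {N^k}. -/
/-!
Since `W` is doubly stochastic, the deviations `x_i - x̄` of one step are obtained by applying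
`W - 𝟙𝟙ᵀ/m`, of norm `η < 1`, to the deviations of the previous step perturbed by
`λᵏ (∇f_j + n_j)`. Young's inequality turns this into
`Sₖ₊₁ ≤ η²(1+ε) Sₖ + η²(1+ε⁻¹) (λᵏ)² Uₖ` for the total squared deviation `Sₖ`, where
`Uₖ = Σ_j (2G² + 2‖n_jᵏ‖²)` has expectation bounded uniformly in `k`. Hence `aₖ = E[Sₖ]`
satisfies `aₖ₊₁ ≤ c aₖ + bₖ` with `c < 1` and `Σ bₖ < ∞`, which forces `aₖ → 0`.
-/

open MeasureTheory ProbabilityTheory Filter Finset Topology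
open scoped NNReal Matrix

theorem Matrix.sum_norm_sq_sum_smul_le {ι κ : Type*} [Fintype ι] [DecidableEq ι] [Fintype κ]
    (M : Matrix ι ι ℝ) (y : ι → EuclideanSpace ℝ κ) :
    ∑ i, ‖∑ j, M i j • y j‖ ^ 2 ≤ ‖Matrix.toEuclideanCLM (𝕜 := ℝ) M‖ ^ 2 * ∑ j, ‖y j‖ ^ 2 := by
  set η := ‖Matrix.toEuclideanCLM (𝕜 := ℝ) M‖
  have hcoord : ∀ c, ∑ i, (∑ j, M i j * y j c) ^ 2 ≤ η ^ 2 * ∑ j, y j c ^ 2 := by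
    intro c
    set v : EuclideanSpace ℝ ι := WithLp.toLp 2 (fun j => y j c)
    calc ∑ i, (∑ j, M i j * y j c) ^ 2 = ‖Matrix.toEuclideanCLM (𝕜 := ℝ) M v‖ ^ 2 := by
          simp [v, EuclideanSpace.real_norm_sq_eq, Matrix.mulVec, dotProduct]
      _ ≤ (η * ‖v‖) ^ 2 := by gcongr; exact ContinuousLinearMap.le_opNorm _ v
      _ = η ^ 2 * ∑ j, y j c ^ 2 := by rw [mul_pow, EuclideanSpace.real_norm_sq_eq]
  calc ∑ i, ‖∑ j, M i j • y j‖ ^ 2 = ∑ c, ∑ i, (∑ j, M i j * y j c) ^ 2 := by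
        simp_rw [EuclideanSpace.real_norm_sq_eq]
        rw [sum_comm]
        simp
    _ ≤ ∑ c, η ^ 2 * ∑ j, y j c ^ 2 := sum_le_sum fun c _ => hcoord c
    _ = η ^ 2 * ∑ j, ‖y j‖ ^ 2 := by
        simp_rw [← mul_sum, EuclideanSpace.real_norm_sq_eq]
        rw [sum_comm]

theorem measurable_gradient {E : Type*} [NormedAddCommGroup E] [InnerProductSpace ℝ E]
    [CompleteSpace E] [MeasurableSpace E] [BorelSpace E] (f : E → ℝ) :
    Measurable (gradient f) :=
  (InnerProductSpace.toDual ℝ E).symm.continuous.measurable.comp (measurable_fderiv ℝ f)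

theorem norm_add_sq_le_mul_add_mul {E : Type*} [SeminormedAddCommGroup E] (a b : E) {ε : ℝ}
    (hε : 0 < ε) : ‖a + b‖ ^ 2 ≤ (1 + ε) * ‖a‖ ^ 2 + (1 + ε⁻¹) * ‖b‖ ^ 2 := by
  have := two_mul_le_add_mul_sq (a := ‖a‖) (b := ‖b‖) hε
  calc ‖a + b‖ ^ 2 ≤ (‖a‖ + ‖b‖) ^ 2 := by gcongr; exact norm_add_le a b
    _ ≤ _ := by linarith

section Recursion

variable {a b : ℕ → ℝ} {c : ℝ}

theorem le_pow_mul_add_sum_of_le_mul_add (hc0 : 0 ≤ c) (hc1 : c ≤ 1) (hb : ∀ k, 0 ≤ b k)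
    (hrec : ∀ k, a (k + 1) ≤ c * a k + b k) (K n : ℕ) :
    a (n + K) ≤ c ^ n * a K + ∑ j ∈ range n, b (j + K) := by
  induction n with
  | zero => simp
  | succ n ih =>
    have hS : 0 ≤ ∑ j ∈ range n, b (j + K) := sum_nonneg fun j _ => hb _
    have hcS : c * ∑ j ∈ range n, b (j + K) ≤ ∑ j ∈ range n, b (j + K) :=
      mul_le_of_le_one_left hS hc1
    calc a (n + 1 + K) = a (n + K + 1) := by rw [Nat.add_right_comm]
      _ ≤ c * a (n + K) + b (n + K) := hrec _
      _ ≤ c * (c ^ n * a K + ∑ j ∈ range n, b (j + K)) + b (n + K) := by gcongr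
      _ ≤ c ^ (n + 1) * a K + ∑ j ∈ range (n + 1), b (j + K) := by
          rw [sum_range_succ, pow_succ]; linarith

theorem tendsto_zero_of_le_mul_add_of_summable (hc0 : 0 ≤ c) (hc1 : c < 1) (ha : ∀ k, 0 ≤ a k)
    (hb : ∀ k, 0 ≤ b k) (hsum : Summable b) (hrec : ∀ k, a (k + 1) ≤ c * a k + b k) :
    Tendsto a atTop (𝓝 0) := by
  refine tendsto_order.2 ⟨fun ε hε => .of_forall fun k => hε.trans_le (ha k), fun ε hε => ?_⟩
  obtain ⟨K, hK⟩ := ((tendsto_sum_nat_add b).eventually (gt_mem_nhds (half_pos hε))).exists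
  have hpow : ∀ᶠ n in atTop, c ^ n * a K < ε / 2 := by
    have := (tendsto_pow_atTop_nhds_zero_of_lt_one hc0 hc1).mul_const (a K)
    rw [zero_mul] at this
    exact this.eventually_lt_const (half_pos hε)
  obtain ⟨N, hN⟩ := eventually_atTop.1 hpow
  refine eventually_atTop.2 ⟨N + K, fun n hn => ?_⟩
  obtain ⟨n, rfl⟩ := Nat.exists_eq_add_of_le' (le_of_add_le_right hn)
  have htail : ∑ j ∈ range n, b (j + K) ≤ ∑' j, b (j + K) :=
    ((summable_nat_add_iff K).2 hsum).sum_le_tsum _ fun j _ => hb _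
  have := le_pow_mul_add_sum_of_le_mul_add hc0 hc1.le hb hrec K n
  linarith [hN n (by omega)]

end Recursion

section Gaussian

variable {Ω κ : Type*} [MeasurableSpace Ω] {μ : Measure Ω} {σ : ℝ≥0}

theorem aemeasurable_of_map_eq_gaussianReal {Y : Ω → ℝ} (h : μ.map Y = gaussianReal 0 σ) :
    AEMeasurable Y μ :=
  aemeasurable_of_map_neZero (by rw [h]; infer_instance)

theorem memLp_two_of_map_eq_gaussianReal {Y : Ω → ℝ} (h : μ.map Y = gaussianReal 0 σ) :
    MemLp Y 2 μ :=
  (memLp_map_measure_iff aestronglyMeasurable_id (aemeasurable_of_map_eq_gaussianReal h)).1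
    (h ▸ memLp_id_gaussianReal 2)

theorem integral_sq_of_map_eq_gaussianReal {Y : Ω → ℝ} (h : μ.map Y = gaussianReal 0 σ) :
    ∫ ω, Y ω ^ 2 ∂μ = σ := by
  have hY := aemeasurable_of_map_eq_gaussianReal h
  have hmean : μ[Y] = 0 := by
    rw [← integral_id_gaussianReal (μ := 0) (v := σ), ← h]
    exact (integral_map hY aestronglyMeasurable_id).symm
  rw [← variance_of_integral_eq_zero hY hmean, ← variance_id_map hY, h, variance_id_gaussianReal]

variable [Fintype κ] {X : Ω → EuclideanSpace ℝ κ}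

theorem memLp_two_of_forall_map_apply_eq_gaussianReal
    (h : ∀ c, μ.map (fun ω => X ω c) = gaussianReal 0 σ) : MemLp X 2 μ := by
  have hX : AEMeasurable X μ :=
    (MeasurableEquiv.toLp 2 (κ → ℝ)).measurable.comp_aemeasurable
      (aemeasurable_pi_iff.2 fun c => aemeasurable_of_map_eq_gaussianReal (h c))
  rw [memLp_two_iff_integrable_sq_norm hX.aestronglyMeasurable]
  simp_rw [EuclideanSpace.real_norm_sq_eq]
  exact integrable_finsetSum _ fun c _ => (memLp_two_of_map_eq_gaussianReal (h c)).integrable_sq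

theorem integral_norm_sq_of_forall_map_apply_eq_gaussianReal
    (h : ∀ c, μ.map (fun ω => X ω c) = gaussianReal 0 σ) :
    ∫ ω, ‖X ω‖ ^ 2 ∂μ = Fintype.card κ * σ := by
  simp_rw [EuclideanSpace.real_norm_sq_eq]
  rw [integral_finsetSum _ fun c _ => (memLp_two_of_map_eq_gaussianReal (h c)).integrable_sq]
  simp [integral_sq_of_map_eq_gaussianReal (h _)]

end Gaussian

section Consensus

variable {ι κ : Type*} [Fintype ι]

noncomputable def consensusError {E : Type*} [NormedAddCommGroup E] [NormedSpace ℝ E]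
    (x : ι → E) : ℝ :=
  ∑ i, ‖x i - (Fintype.card ι : ℝ)⁻¹ • ∑ j, x j‖ ^ 2

theorem consensusError_nonneg {E : Type*} [NormedAddCommGroup E] [NormedSpace ℝ E] (x : ι → E) :
    0 ≤ consensusError x :=
  sum_nonneg fun _ _ => sq_nonneg _

theorem norm_sub_average_sq_le_consensusError {E : Type*} [NormedAddCommGroup E]
    [NormedSpace ℝ E] (x : ι → E) (i : ι) :
    ‖x i - (Fintype.card ι : ℝ)⁻¹ • ∑ j, x j‖ ^ 2 ≤ consensusError x :=
  single_le_sum (f := fun i => ‖x i - (Fintype.card ι : ℝ)⁻¹ • ∑ j, x j‖ ^ 2)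
    (fun _ _ => sq_nonneg _) (mem_univ i)

variable {W : Matrix ι ι ℝ}

/- The rows of `W - 𝟙𝟙ᵀ / card ι` sum to zero, which is why the shift `v` is free. -/
theorem sum_mix_sub_average_eq {E : Type*} [AddCommGroup E] [Module ℝ E]
    (hrow : W *ᵥ (fun _ => 1) = fun _ => 1) (hcol : (fun _ => 1) ᵥ* W = fun _ => 1)
    (z : ι → E) (v : E) (i : ι) :
    ∑ j, W i j • z j - (Fintype.card ι : ℝ)⁻¹ • ∑ i', ∑ j, W i' j • z j =
      ∑ j, (W - (Fintype.card ι : ℝ)⁻¹ • Matrix.of fun _ _ => 1 : Matrix ι ι ℝ) i j •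
        (z j - v) := by
  have hrow_i : ∑ j, W i j = 1 := by simpa [Matrix.mulVec, dotProduct] using congrFun hrow i
  have hcol_j (j : ι) : ∑ i', W i' j = 1 := by
    simpa [Matrix.vecMul, dotProduct] using congrFun hcol j
  have hcard : (Fintype.card ι : ℝ) ≠ 0 := by
    have : Nonempty ι := ⟨i⟩
    exact Nat.cast_ne_zero.2 Fintype.card_ne_zero
  have hmix : ∑ i', ∑ j, W i' j • z j = ∑ j, z j := by
    rw [sum_comm]
    simp [← sum_smul, hcol_j]
  simp only [Matrix.sub_apply, Matrix.smul_apply, Matrix.of_apply, smul_eq_mul, mul_one, sub_smul,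
    smul_sub, sum_sub_distrib, ← sum_smul, hrow_i, hmix, ← smul_sum, sum_const, card_univ,
    nsmul_eq_mul, mul_inv_cancel₀ hcard, sub_self, sub_zero]

variable [DecidableEq ι] [Fintype κ]

theorem consensusError_mix_le (hrow : W *ᵥ (fun _ => 1) = fun _ => 1)
    (hcol : (fun _ => 1) ᵥ* W = fun _ => 1) (z : ι → EuclideanSpace ℝ κ) (v : EuclideanSpace ℝ κ) :
    consensusError (fun i => ∑ j, W i j • z j) ≤
      ‖Matrix.toEuclideanCLM (𝕜 := ℝ) (n := ι)
          (W - (Fintype.card ι : ℝ)⁻¹ • Matrix.of fun _ _ => (1 : ℝ))‖ ^ 2 *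
        ∑ j, ‖z j - v‖ ^ 2 := by
  simp_rw [consensusError, sum_mix_sub_average_eq hrow hcol z v]
  exact Matrix.sum_norm_sq_sum_smul_le _ _

theorem consensusError_step_le (hrow : W *ᵥ (fun _ => 1) = fun _ => 1)
    (hcol : (fun _ => 1) ᵥ* W = fun _ => 1) {η : ℝ}
    (hη : ‖Matrix.toEuclideanCLM (𝕜 := ℝ) (n := ι)
      (W - (Fintype.card ι : ℝ)⁻¹ • Matrix.of fun _ _ => (1 : ℝ))‖ ≤ η)
    {x x' u : ι → EuclideanSpace ℝ κ} {t ε : ℝ} (hε : 0 < ε)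
    (hx' : ∀ i, x' i = ∑ j, W i j • (x j - t • u j)) :
    consensusError x' ≤
      η ^ 2 * (1 + ε) * consensusError x + η ^ 2 * (1 + ε⁻¹) * t ^ 2 * ∑ j, ‖u j‖ ^ 2 := by
  set xavg := (Fintype.card ι : ℝ)⁻¹ • ∑ j, x j
  have hyoung (j : ι) : ‖x j - t • u j - xavg‖ ^ 2 ≤
      (1 + ε) * ‖x j - xavg‖ ^ 2 + (1 + ε⁻¹) * (t ^ 2 * ‖u j‖ ^ 2) := by
    have := norm_add_sq_le_mul_add_mul (x j - xavg) (-(t • u j)) hε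
    rwa [norm_neg, norm_smul, mul_pow, Real.norm_eq_abs, sq_abs, sub_add_eq_add_sub,
      ← sub_eq_add_neg] at this
  rw [show x' = fun i => ∑ j, W i j • (x j - t • u j) from funext hx']
  calc _ ≤ ‖Matrix.toEuclideanCLM (𝕜 := ℝ) (n := ι)
          (W - (Fintype.card ι : ℝ)⁻¹ • Matrix.of fun _ _ => (1 : ℝ))‖ ^ 2 *
        ∑ j, ‖x j - t • u j - xavg‖ ^ 2 := consensusError_mix_le hrow hcol _ xavg
    _ ≤ η ^ 2 * ∑ j, ((1 + ε) * ‖x j - xavg‖ ^ 2 + (1 + ε⁻¹) * (t ^ 2 * ‖u j‖ ^ 2)) := by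
        gcongr with j
        exact hyoung j
    _ = _ := by simp only [consensusError, sum_add_distrib, ← mul_sum]; ring

theorem consensusError_gradient_step_le {f : ι → EuclideanSpace ℝ κ → ℝ} {G : ℝ}
    (hG : ∀ i θ, ‖gradient (f i) θ‖ ≤ G) (hrow : W *ᵥ (fun _ => 1) = fun _ => 1)
    (hcol : (fun _ => 1) ᵥ* W = fun _ => 1) {η : ℝ}
    (hη : ‖Matrix.toEuclideanCLM (𝕜 := ℝ) (n := ι)
      (W - (Fintype.card ι : ℝ)⁻¹ • Matrix.of fun _ _ => (1 : ℝ))‖ ≤ η)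
    {x x' n : ι → EuclideanSpace ℝ κ} {t ε : ℝ} (hε : 0 < ε)
    (hx' : ∀ i, x' i = ∑ j, W i j • (x j - t • (gradient (f j) (x j) + n j))) :
    consensusError x' ≤ η ^ 2 * (1 + ε) * consensusError x +
      η ^ 2 * (1 + ε⁻¹) * t ^ 2 * ∑ j, (2 * G ^ 2 + 2 * ‖n j‖ ^ 2) := by
  refine (consensusError_step_le hrow hcol hη hε hx').trans ?_
  gcongr with j
  have hGj : ‖gradient (f j) (x j)‖ ^ 2 ≤ G ^ 2 := by gcongr; exact hG j _
  have := norm_add_sq_le_mul_add_mul (gradient (f j) (x j)) (n j) one_pos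
  norm_num at this
  linarith

end Consensus

section Iterates

variable {Ω ι : Type*} [MeasurableSpace Ω] {μ : Measure Ω} [Fintype ι]

theorem integrable_consensusError {E : Type*} [NormedAddCommGroup E] [NormedSpace ℝ E]
    {Y : ι → Ω → E} (hY : ∀ i, MemLp (fun ω => Y i ω) 2 μ) :
    Integrable (fun ω => consensusError fun i => Y i ω) μ := by
  refine integrable_finsetSum _ fun i _ => ?_
  have : MemLp (fun ω => Y i ω - (Fintype.card ι : ℝ)⁻¹ • ∑ j, Y j ω) 2 μ :=
    (hY i).sub ((memLp_finsetSum _ fun j _ => hY j).const_smul _)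
  exact this.integrable_norm_pow two_ne_zero

theorem memLp_two_iterate {E : Type*} [NormedAddCommGroup E] [InnerProductSpace ℝ E]
    [CompleteSpace E] [MeasurableSpace E] [BorelSpace E] [SecondCountableTopology E]
    [IsFiniteMeasure μ] {W : Matrix ι ι ℝ} {lam : ℕ → ℝ}
    {f : ι → E → ℝ} {G : ℝ} (hG : ∀ i θ, ‖gradient (f i) θ‖ ≤ G) {N x : ℕ → Ω → ι → E}
    (hN : ∀ k j, MemLp (fun ω => N k ω j) 2 μ) {x0 : ι → E} (hx0 : ∀ ω, x 0 ω = x0)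
    (hx : ∀ k ω i, x (k + 1) ω i =
      ∑ j, W i j • (x k ω j - lam k • (gradient (f j) (x k ω j) + N k ω j)))
    (k : ℕ) (i : ι) : MemLp (fun ω => x k ω i) 2 μ := by
  induction k generalizing i with
  | zero => simp only [hx0]; exact memLp_const _
  | succ k ih =>
    have hgrad (j : ι) : MemLp (fun ω => gradient (f j) (x k ω j)) 2 μ :=
      .of_bound ((measurable_gradient _).comp_aemeasurable (ih j).aemeasurable).aestronglyMeasurable
        G (ae_of_all _ fun ω => hG j _)
    simp only [hx]
    exact memLp_finsetSum _ fun j _ =>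
      ((ih j).sub (((hgrad j).add (hN k j)).const_smul (lam k))).const_smul (W i j)

theorem tendsto_integral_of_le_mul_add {S U : ℕ → Ω → ℝ} {b : ℕ → ℝ} {c B : ℝ} (hc0 : 0 ≤ c)
    (hc1 : c < 1) (hS0 : ∀ k ω, 0 ≤ S k ω) (hS : ∀ k, Integrable (S k) μ)
    (hU0 : ∀ k ω, 0 ≤ U k ω) (hU : ∀ k, Integrable (U k) μ) (hUB : ∀ k, ∫ ω, U k ω ∂μ ≤ B)
    (hb : ∀ k, 0 ≤ b k) (hbsum : Summable b)
    (hrec : ∀ k ω, S (k + 1) ω ≤ c * S k ω + b k * U k ω) :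
    Tendsto (fun k => ∫ ω, S k ω ∂μ) atTop (𝓝 0) := by
  have hB : 0 ≤ B := (integral_nonneg (hU0 0)).trans (hUB 0)
  refine tendsto_zero_of_le_mul_add_of_summable hc0 hc1 (fun k => integral_nonneg (hS0 k))
    (fun k => mul_nonneg (hb k) hB) (hbsum.mul_right B) fun k => ?_
  calc ∫ ω, S (k + 1) ω ∂μ ≤ ∫ ω, (c * S k ω + b k * U k ω) ∂μ :=
        integral_mono (hS _) (((hS k).const_mul c).add ((hU k).const_mul (b k))) (hrec k)
    _ = c * ∫ ω, S k ω ∂μ + b k * ∫ ω, U k ω ∂μ := by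
        rw [integral_add ((hS k).const_mul c) ((hU k).const_mul (b k)), integral_const_mul,
          integral_const_mul]
    _ ≤ c * ∫ ω, S k ω ∂μ + b k * B := by gcongr; exacts [hb k, hUB k]

theorem tendsto_integral_consensusError_iterate {κ : Type*} [DecidableEq ι] [Fintype κ]
    [IsProbabilityMeasure μ] {f : ι → EuclideanSpace ℝ κ → ℝ} {G : ℝ}
    (hG : ∀ i θ, ‖gradient (f i) θ‖ ≤ G) {W : Matrix ι ι ℝ}
    (hrow : W *ᵥ (fun _ => 1) = fun _ => 1) (hcol : (fun _ => 1) ᵥ* W = fun _ => 1)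
    (hη : ‖Matrix.toEuclideanCLM (𝕜 := ℝ) (n := ι)
      (W - (Fintype.card ι : ℝ)⁻¹ • Matrix.of fun _ _ => (1 : ℝ))‖ < 1)
    {lam : ℕ → ℝ} (hsq : Summable fun k => lam k ^ 2) {N x : ℕ → Ω → ι → EuclideanSpace ℝ κ}
    (hN : ∀ k j, MemLp (fun ω => N k ω j) 2 μ) {V : ℝ} (hV : ∀ k j, ∫ ω, ‖N k ω j‖ ^ 2 ∂μ ≤ V)
    {x0 : ι → EuclideanSpace ℝ κ} (hx0 : ∀ ω, x 0 ω = x0)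
    (hx : ∀ k ω i, x (k + 1) ω i =
      ∑ j, W i j • (x k ω j - lam k • (gradient (f j) (x k ω j) + N k ω j))) :
    Tendsto (fun k => ∫ ω, consensusError (x k ω) ∂μ) atTop (𝓝 0) := by
  set η := ‖Matrix.toEuclideanCLM (𝕜 := ℝ) (n := ι)
    (W - (Fintype.card ι : ℝ)⁻¹ • Matrix.of fun _ _ => (1 : ℝ))‖
  obtain ⟨ε, hε, hcontr⟩ : ∃ ε, 0 < ε ∧ η ^ 2 * (1 + ε) < 1 :=
    have hη0 : 0 ≤ η := norm_nonneg _
    have hη2 : η ^ 2 < 1 := by nlinarith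
    ⟨(1 - η ^ 2) / 2, by linarith,
      by nlinarith [mul_pos (sub_pos.2 hη2) (by linarith : 0 < 2 - η ^ 2)]⟩
  have hUj k j : Integrable (fun ω => 2 * G ^ 2 + 2 * ‖N k ω j‖ ^ 2) μ :=
    (integrable_const _).add (((hN k j).integrable_norm_pow two_ne_zero).const_mul 2)
  refine tendsto_integral_of_le_mul_add (U := fun k ω => ∑ j, (2 * G ^ 2 + 2 * ‖N k ω j‖ ^ 2))
    (b := fun k => η ^ 2 * (1 + ε⁻¹) * lam k ^ 2) (B := Fintype.card ι * (2 * G ^ 2 + 2 * V))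
    (by positivity) hcontr (fun k ω => consensusError_nonneg _)
    (fun k => integrable_consensusError (memLp_two_iterate hG hN hx0 hx k))
    (fun k ω => by positivity) (fun k => integrable_finsetSum _ fun j _ => hUj k j) (fun k => ?_)
    (fun k => by positivity) (hsq.mul_left _)
    (fun k ω => consensusError_gradient_step_le hG hrow hcol le_rfl hε (hx k ω))
  rw [integral_finsetSum _ fun j _ => hUj k j]
  calc ∑ j, ∫ ω, (2 * G ^ 2 + 2 * ‖N k ω j‖ ^ 2) ∂μ ≤ ∑ _j : ι, (2 * G ^ 2 + 2 * V) := by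
        refine sum_le_sum fun j _ => ?_
        rw [integral_add (integrable_const _)
          (((hN k j).integrable_norm_pow two_ne_zero).const_mul 2), integral_const,
          integral_const_mul]
        simp only [probReal_univ, one_smul]
        linarith [hV k j]
    _ = _ := by simp [mul_add]

end Iterates

theorem mean_square_consensus_general
    {m d : ℕ}
    (f : Fin m → EuclideanSpace ℝ (Fin d) → ℝ)
    (G : ℝ≥0)
    (hG : ∀ i θ, ‖gradient (f i) θ‖ ≤ (G : ℝ))
    (W : Matrix (Fin m) (Fin m) ℝ)
    (hWrow : W *ᵥ (fun _ => (1 : ℝ)) = fun _ => 1)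
    (hWcol : (fun _ => (1 : ℝ)) ᵥ* W = fun _ => 1)
    (hη : ‖Matrix.toEuclideanCLM (𝕜 := ℝ) (n := Fin m)
        (W - (m : ℝ)⁻¹ • Matrix.of (fun _ _ => (1 : ℝ)))‖ < 1)
    (lam : ℕ → ℝ)
    (hsq : Summable (fun k => lam k ^ 2))
    {Ω : Type*} [MeasureSpace Ω] [IsProbabilityMeasure (ℙ : Measure Ω)]
    (σ : ℝ≥0)
    (N : ℕ → Ω → Fin m → EuclideanSpace ℝ (Fin d))
    (hdist : ∀ k i j, Measure.map (fun ω => N k ω i j) ℙ = gaussianReal 0 σ)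
    (x : ℕ → Ω → Fin m → EuclideanSpace ℝ (Fin d))
    (x0 : Fin m → EuclideanSpace ℝ (Fin d)) (hx0 : ∀ ω, x 0 ω = x0)
    (hx : ∀ k ω i, x (k + 1) ω i =
      ∑ j, W i j • (x k ω j - lam k • (gradient (f j) (x k ω j) + N k ω j))) :
    ∀ i, Tendsto
      (fun k => ∫ ω, ‖x k ω i - (m : ℝ)⁻¹ • ∑ j, x k ω j‖ ^ 2 ∂ℙ) atTop (nhds 0) := by
  intro i
  have hN k j := memLp_two_of_forall_map_apply_eq_gaussianReal (hdist k j)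
  have hV k j := (integral_norm_sq_of_forall_map_apply_eq_gaussianReal (hdist k j)).le
  have hlim := tendsto_integral_consensusError_iterate hG hWrow hWcol
    (by rwa [Fintype.card_fin]) hsq hN hV hx0 hx
  refine squeeze_zero (fun k => integral_nonneg fun ω => by positivity) (fun k => ?_) hlim
  refine integral_mono_of_nonneg (ae_of_all _ fun ω => by positivity)
    (integrable_consensusError (memLp_two_iterate hG hN hx0 hx k)) (ae_of_all _ fun ω => ?_)
  simpa only [Fintype.card_fin] using norm_sub_average_sq_le_consensusError (x k ω) i

/-- **Mean-square consensus of Algorithm 2** (Remark 3 of the paper).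
Each agent `i` has a differentiable local objective `f i` with `ν`-Lipschitz and
`G`-bounded gradient; the weight matrix `W` is symmetric, doubly stochastic, with
`η = ‖W - (1/m)𝟙𝟙ᵀ‖ < 1` (spectral norm); stepsizes are square summable; the privacy
noises `N k ω i` have i.i.d. zero-mean Gaussian coordinates of variance `σ`, independent
across iterations, agents and coordinates.  Then `E[‖x_i^k - x̄^k‖²] → 0` for every agent `i`, the expectation being over the
Gaussian noise sequence. -/
theorem mean_square_consensus
    {m d : ℕ} (hm : 0 < m)
    (f : Fin m → EuclideanSpace ℝ (Fin d) → ℝ)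
    (hdiff : ∀ i, Differentiable ℝ (f i))
    (ν G : ℝ≥0)
    (hLip : ∀ i, LipschitzWith ν (gradient (f i)))
    (hG : ∀ i θ, ‖gradient (f i) θ‖ ≤ (G : ℝ))
    (W : Matrix (Fin m) (Fin m) ℝ)
    (hWsymm : W.IsSymm)
    (hWnonneg : ∀ i j, 0 ≤ W i j)
    (hWrow : W *ᵥ (fun _ => (1 : ℝ)) = fun _ => 1)
    (hWcol : (fun _ => (1 : ℝ)) ᵥ* W = fun _ => 1)
    (hη : ‖Matrix.toEuclideanCLM (𝕜 := ℝ) (n := Fin m)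
        (W - (m : ℝ)⁻¹ • Matrix.of (fun _ _ => (1 : ℝ)))‖ < 1)
    (lam : ℕ → ℝ) (hlam : ∀ k, 0 ≤ lam k)
    (hsq : Summable (fun k => lam k ^ 2))
    {Ω : Type*} [MeasureSpace Ω] [IsProbabilityMeasure (ℙ : Measure Ω)]
    (σ : ℝ≥0)
    (N : ℕ → Ω → Fin m → EuclideanSpace ℝ (Fin d))
    (hdist : ∀ k i j, Measure.map (fun ω => N k ω i j) ℙ = gaussianReal 0 σ)
    (hindep : iIndepFun
      (fun p : ℕ × Fin m × Fin d => fun ω => N p.1 ω p.2.1 p.2.2) ℙ)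
    (x : ℕ → Ω → Fin m → EuclideanSpace ℝ (Fin d))
    (x0 : Fin m → EuclideanSpace ℝ (Fin d)) (hx0 : ∀ ω, x 0 ω = x0)
    (hx : ∀ k ω i, x (k + 1) ω i =
      ∑ j, W i j • (x k ω j - lam k • (gradient (f j) (x k ω j) + N k ω j))) :
    ∀ i, Tendsto
      (fun k => ∫ ω, ‖x k ω i - (m : ℝ)⁻¹ • ∑ j, x k ω j‖ ^ 2 ∂ℙ) atTop (nhds 0) :=
  mean_square_consensus_general f G hG W hWrow hWcol hη lam hsq σ N hdist x x0 hx0 hx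
end

section
/- Constant-stepsize bound on the gradient-average deviation (key estimate in the saddle-avoidance proof): Let x^{k+1} = (W ⊗ I_d)(x^k − λ(g^k + N^k)) with constant stepsize λ > 0, W symmetric doubly stochastic, η := ‖W − (1/m)𝟏𝟏ᵀ‖ ∈ (0,1), g_i^k = ∇f_i(x_i^k) where each ∇f_i is ν-Lipschitz and ‖∇f_i‖ ≤ G everywhere, and averages x̄^k := (1/m)Σ_i x_i^k. Let q^k := (1/m)Σ_{i=1}^m g_i^k − ∇F(x̄^k) with F := (1/m)Σ f_i. If the noise satisfies ‖N^l‖ ≤ T for all l ≤ k−1, then ‖q^k‖ ≤ (ν η^k/√m) ‖x^0 − x̄^0 ⊗ 𝟏‖ + (ν λ/√m) · ((1 − η^k)/(1 − η)) · (√m G + T). -/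
/-!
The consensus error `e^k = x^k - x̄^k ⊗ 𝟏` satisfies
`e^{k+1} = ((W - 𝟏𝟏ᵀ/m) ⊗ I_d)(e^k - λ(g^k + N^k))`: mixing by `W` preserves the average because
the columns of `W` sum to one, and `W - 𝟏𝟏ᵀ/m` annihilates the constant vector `x̄^k ⊗ 𝟏` because
its rows sum to zero. Hence `‖e^{k+1}‖ ≤ η (‖e^k‖ + λ(√m G + T))`, which unrolls to a geometric
bound on `‖e^k‖`. Finally `q^k` is an average of differences `∇f_i(x_i^k) - ∇f_i(x̄^k)`, so
Lipschitz continuity and Cauchy–Schwarz give `‖q^k‖ ≤ (ν/√m) ‖e^k‖`.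
-/

open scoped Matrix NNReal

/-- The Euclidean norm of the stacked vector `(y 1, …, y m) ∈ ℝ^{md}`. -/
noncomputable def stackedNorm {m d : ℕ} (y : Fin m → EuclideanSpace ℝ (Fin d)) : ℝ :=
  Real.sqrt (∑ i, ‖y i‖ ^ 2)

open Finset

namespace stackedNorm

variable {m d : ℕ}

lemma eq_norm_toLp (y : Fin m → EuclideanSpace ℝ (Fin d)) :
    stackedNorm y = ‖WithLp.toLp 2 y‖ :=
  (PiLp.norm_eq_of_L2 _).symm

lemma nonneg (y : Fin m → EuclideanSpace ℝ (Fin d)) : 0 ≤ stackedNorm y :=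
  Real.sqrt_nonneg _

lemma add_le (a b : Fin m → EuclideanSpace ℝ (Fin d)) :
    stackedNorm (a + b) ≤ stackedNorm a + stackedNorm b := by
  simpa only [eq_norm_toLp, WithLp.toLp_add] using norm_add_le _ _

lemma sub_le (a b : Fin m → EuclideanSpace ℝ (Fin d)) :
    stackedNorm (a - b) ≤ stackedNorm a + stackedNorm b := by
  simpa only [eq_norm_toLp, WithLp.toLp_sub] using norm_sub_le _ _

lemma smul (t : ℝ) (y : Fin m → EuclideanSpace ℝ (Fin d)) :
    stackedNorm (t • y) = |t| * stackedNorm y := by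
  rw [eq_norm_toLp, eq_norm_toLp, WithLp.toLp_smul, norm_smul, Real.norm_eq_abs]

lemma le_sqrt_mul {y : Fin m → EuclideanSpace ℝ (Fin d)} {C : ℝ} (hC : 0 ≤ C)
    (h : ∀ i, ‖y i‖ ≤ C) : stackedNorm y ≤ √m * C := by
  rw [← Real.sqrt_sq hC, ← Real.sqrt_mul m.cast_nonneg]
  refine Real.sqrt_le_sqrt ?_
  calc ∑ i, ‖y i‖ ^ 2 ≤ ∑ _i : Fin m, C ^ 2 := by gcongr with i; exact h i
    _ = m * C ^ 2 := by simp

lemma sum_norm_le_sqrt_mul (y : Fin m → EuclideanSpace ℝ (Fin d)) :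
    ∑ i, ‖y i‖ ≤ √m * stackedNorm y := by
  rw [stackedNorm, ← Real.sqrt_mul m.cast_nonneg]
  refine Real.le_sqrt_of_sq_le ?_
  simpa using sq_sum_le_card_mul_sum_sq (s := univ) (f := fun i => ‖y i‖)

lemma sq_eq_sum_coord (y : Fin m → EuclideanSpace ℝ (Fin d)) :
    stackedNorm y ^ 2 = ∑ c, ‖WithLp.toLp 2 (fun i => y i c)‖ ^ 2 := by
  rw [stackedNorm, Real.sq_sqrt (by positivity)]
  simp only [EuclideanSpace.real_norm_sq_eq]
  exact sum_comm

/-- `fun i => ∑ j, A i j • v j` is `(A ⊗ I_d) v`, which acts as `A` on each coordinate of `ℝ^d`. -/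
lemma sum_smul_le_opNorm_mul (A : Matrix (Fin m) (Fin m) ℝ) (v : Fin m → EuclideanSpace ℝ (Fin d)) :
    stackedNorm (fun i => ∑ j, A i j • v j)
      ≤ ‖Matrix.toEuclideanCLM (𝕜 := ℝ) (n := Fin m) A‖ * stackedNorm v := by
  refine le_of_sq_le_sq ?_ (mul_nonneg (norm_nonneg _) (nonneg v))
  have hcoord : ∀ c, WithLp.toLp 2 (fun i => (∑ j, A i j • v j) c)
      = Matrix.toEuclideanCLM (𝕜 := ℝ) (n := Fin m) A (WithLp.toLp 2 fun j => v j c) := by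
    intro c
    simp only [WithLp.ofLp_sum, WithLp.ofLp_smul, Finset.sum_apply, Pi.smul_apply,
      smul_eq_mul, Matrix.toEuclideanCLM_toLp]
    rfl
  rw [mul_pow, sq_eq_sum_coord, sq_eq_sum_coord, mul_sum]
  gcongr with c
  rw [hcoord, ← mul_pow]
  gcongr
  exact ContinuousLinearMap.le_opNorm _ _

end stackedNorm

section Consensus

variable {E : Type*} [AddCommGroup E] [Module ℝ E] {m : ℕ}

noncomputable def average (u : Fin m → E) : E := (m : ℝ)⁻¹ • ∑ i, u i

noncomputable def deviation (u : Fin m → E) : Fin m → E := fun i => u i - average u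

lemma average_mix {W : Matrix (Fin m) (Fin m) ℝ}
    (hWcol : (fun _ => (1 : ℝ)) ᵥ* W = fun _ => 1) (u : Fin m → E) :
    average (fun i => ∑ j, W i j • u j) = average u := by
  rw [average, average, sum_comm]
  congr 1
  refine sum_congr rfl fun j _ => ?_
  have hj := congrFun hWcol j
  simp only [Matrix.vecMul, dotProduct, one_mul] at hj
  rw [← sum_smul, hj, one_smul]

/-- The shift `c` is free because the rows of `W - 𝟏𝟏ᵀ/m` sum to zero. -/
lemma deviation_mix {W : Matrix (Fin m) (Fin m) ℝ}
    (hWrow : W *ᵥ (fun _ => (1 : ℝ)) = fun _ => 1)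
    (hWcol : (fun _ => (1 : ℝ)) ᵥ* W = fun _ => 1) (u : Fin m → E) (c : E) :
    deviation (fun i => ∑ j, W i j • u j)
      = fun i => ∑ j,
          (W - (m : ℝ)⁻¹ • Matrix.of fun _ _ => 1 : Matrix (Fin m) (Fin m) ℝ) i j • (u j - c) := by
  funext i
  have hm : (m : ℝ) ≠ 0 := Nat.cast_ne_zero.mpr (Fin.pos i).ne'
  have hi := congrFun hWrow i
  simp only [Matrix.mulVec, dotProduct, mul_one] at hi
  rw [deviation, average_mix hWcol]
  simp only [average, Matrix.sub_apply,
    Matrix.smul_apply, Matrix.of_apply, smul_eq_mul, mul_one, sub_smul, smul_sub,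
    sum_sub_distrib, ← sum_smul, hi, sum_const, card_univ, Fintype.card_fin, ← smul_sum, one_smul]
  rw [nsmul_eq_mul, mul_inv_cancel₀ hm, one_smul, sub_self, sub_zero]

end Consensus

lemma gradient_const_mul_sum {F ι : Type*} [NormedAddCommGroup F] [InnerProductSpace ℝ F]
    [CompleteSpace F] (s : Finset ι) (f : ι → F → ℝ) (c : ℝ) {θ : F}
    (hf : ∀ i ∈ s, DifferentiableAt ℝ (f i) θ) :
    gradient (fun θ => c * ∑ i ∈ s, f i θ) θ = c • ∑ i ∈ s, gradient (f i) θ := by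
  rw [gradient, fderiv_const_mul (DifferentiableAt.fun_sum hf), fderiv_fun_sum hf,
    map_smul, map_sum]
  rfl

lemma norm_average_gradient_sub_gradient_average_le {m d : ℕ}
    {f : Fin m → EuclideanSpace ℝ (Fin d) → ℝ} (hdiff : ∀ i, Differentiable ℝ (f i)) {ν : ℝ≥0}
    (hLip : ∀ i, LipschitzWith ν (gradient (f i))) (x : Fin m → EuclideanSpace ℝ (Fin d)) :
    ‖average (fun i => gradient (f i) (x i))
        - gradient (fun θ => (m : ℝ)⁻¹ * ∑ i, f i θ) (average x)‖
      ≤ ν / √m * stackedNorm (deviation x) := by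
  rw [gradient_const_mul_sum _ _ _ fun i _ => (hdiff i).differentiableAt, average, ← smul_sub,
    ← sum_sub_distrib, norm_smul, Real.norm_of_nonneg (by positivity)]
  calc (m : ℝ)⁻¹ * ‖∑ i, (gradient (f i) (x i) - gradient (f i) (average x))‖
      ≤ (m : ℝ)⁻¹ * ∑ i, ν * ‖deviation x i‖ := by
        gcongr
        refine (norm_sum_le _ _).trans (sum_le_sum fun i _ => ?_)
        simpa only [dist_eq_norm, deviation] using (hLip i).dist_le_mul (x i) (average x)
    _ ≤ (m : ℝ)⁻¹ * (ν * (√m * stackedNorm (deviation x))) := by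
        rw [← mul_sum]
        gcongr
        exact stackedNorm.sum_norm_le_sqrt_mul _
    _ = ν / √m * stackedNorm (deviation x) := by
        rw [div_eq_mul_inv _ (√(m : ℝ)), ← Real.sqrt_div_self]
        ring

lemma stackedNorm_deviation_mix_sub_le {m d : ℕ} {W : Matrix (Fin m) (Fin m) ℝ}
    (hWrow : W *ᵥ (fun _ => (1 : ℝ)) = fun _ => 1)
    (hWcol : (fun _ => (1 : ℝ)) ᵥ* W = fun _ => 1) (x v : Fin m → EuclideanSpace ℝ (Fin d)) :
    stackedNorm (deviation fun i => ∑ j, W i j • (x j - v j))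
      ≤ ‖Matrix.toEuclideanCLM (𝕜 := ℝ) (n := Fin m)
          (W - (m : ℝ)⁻¹ • Matrix.of (fun _ _ => (1 : ℝ)))‖
        * (stackedNorm (deviation x) + stackedNorm v) := by
  rw [deviation_mix hWrow hWcol _ (average x)]
  refine (stackedNorm.sum_smul_le_opNorm_mul _ _).trans ?_
  gcongr
  have hshift : (fun j => x j - v j - average x) = deviation x - v :=
    funext fun j => sub_right_comm _ _ _
  rw [hshift]
  exact stackedNorm.sub_le _ _

lemma le_geom_of_le_mul_add {a : ℕ → ℝ} {η B : ℝ} (hη0 : 0 ≤ η) (hη1 : η < 1) (hB : 0 ≤ B)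
    {k : ℕ} (h : ∀ n < k, a (n + 1) ≤ η * (a n + B)) :
    a k ≤ η ^ k * a 0 + (1 - η ^ k) / (1 - η) * B := by
  induction k with
  | zero => simp
  | succ k ih =>
    have ih := ih fun n hn => h n (hn.trans k.lt_succ_self)
    have hgeom : (1 - η ^ (k + 1)) / (1 - η) = η * ((1 - η ^ k) / (1 - η)) + 1 := by
      field_simp [(sub_pos.2 hη1).ne']
      ring
    calc a (k + 1) ≤ η * (a k + B) := h k k.lt_succ_self
      _ ≤ η * (η ^ k * a 0 + (1 - η ^ k) / (1 - η) * B + B) := by gcongr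
      _ ≤ η ^ (k + 1) * a 0 + (1 - η ^ (k + 1)) / (1 - η) * B := by
        rw [hgeom, pow_succ]
        nlinarith [mul_nonneg (sub_nonneg.2 hη1.le) hB]

theorem constant_stepsize_deviation_bound_general
    {m d : ℕ}
    (W : Matrix (Fin m) (Fin m) ℝ)
    (hWrow : W *ᵥ (fun _ => (1 : ℝ)) = fun _ => 1)
    (hWcol : (fun _ => (1 : ℝ)) ᵥ* W = fun _ => 1)
    (η : ℝ)
    (hη : η = ‖Matrix.toEuclideanCLM (𝕜 := ℝ) (n := Fin m)
        (W - (m : ℝ)⁻¹ • Matrix.of (fun _ _ => (1 : ℝ)))‖)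
    (hη1 : η < 1)
    (f : Fin m → EuclideanSpace ℝ (Fin d) → ℝ)
    (hdiff : ∀ i, Differentiable ℝ (f i))
    (ν G : ℝ≥0)
    (hLip : ∀ i, LipschitzWith ν (gradient (f i)))
    (hG : ∀ i θ, ‖gradient (f i) θ‖ ≤ (G : ℝ))
    (lam : ℝ) (hlam : 0 < lam)
    (N : ℕ → Fin m → EuclideanSpace ℝ (Fin d))
    (x : ℕ → Fin m → EuclideanSpace ℝ (Fin d))
    (hx : ∀ k i, x (k + 1) i =
      ∑ j, W i j • (x k j - lam • (gradient (f j) (x k j) + N k j)))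
    (k : ℕ) (T : ℝ)
    (hN : ∀ l < k, stackedNorm (N l) ≤ T) :
    ‖(m : ℝ)⁻¹ • ∑ i, gradient (f i) (x k i)
        - gradient (fun θ => (m : ℝ)⁻¹ * ∑ i, f i θ) ((m : ℝ)⁻¹ • ∑ i', x k i')‖
      ≤ ((ν : ℝ) * η ^ k / Real.sqrt m) *
          stackedNorm (fun i => x 0 i - (m : ℝ)⁻¹ • ∑ i', x 0 i')
        + ((ν : ℝ) * lam / Real.sqrt m) * ((1 - η ^ k) / (1 - η)) *
          (Real.sqrt m * (G : ℝ) + T) := by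
  set B := lam * (√m * G + T)
  have hstep : ∀ n < k, stackedNorm (deviation (x (n + 1)))
      ≤ η * (stackedNorm (deviation (x n)) + B) := by
    intro n hn
    rw [show x (n + 1) = _ from funext (hx n), hη]
    refine (stackedNorm_deviation_mix_sub_le hWrow hWcol (x n) _).trans ?_
    gcongr
    change stackedNorm (lam • ((fun j => gradient (f j) (x n j)) + N n)) ≤ _
    rw [stackedNorm.smul, abs_of_pos hlam]
    refine mul_le_mul_of_nonneg_left ?_ hlam.le
    refine (stackedNorm.add_le _ _).trans (add_le_add ?_ (hN n hn))
    exact stackedNorm.le_sqrt_mul G.coe_nonneg fun i => hG i _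
  have hdev : stackedNorm (deviation (x k))
      ≤ η ^ k * stackedNorm (deviation (x 0)) + (1 - η ^ k) / (1 - η) * B := by
    rcases k.eq_zero_or_pos with rfl | hk
    · simp
    · have hB : 0 ≤ B := mul_nonneg hlam.le
        (add_nonneg (by positivity) ((stackedNorm.nonneg _).trans (hN 0 hk)))
      exact le_geom_of_le_mul_add (a := fun n => stackedNorm (deviation (x n)))
        (hη ▸ norm_nonneg _) hη1 hB hstep
  calc _ ≤ ν / √m * stackedNorm (deviation (x k)) :=
        norm_average_gradient_sub_gradient_average_le hdiff hLip (x k)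
    _ ≤ ν / √m * (η ^ k * stackedNorm (deviation (x 0)) + (1 - η ^ k) / (1 - η) * B) := by
        gcongr
    _ = _ := by
        unfold deviation average
        ring

/-- **Constant-stepsize bound on the gradient-average deviation** (key estimate in the
saddle-avoidance proof of Theorem 3): for the dynamics
`x^{k+1} = (W ⊗ I_d)(x^k - λ(g^k + N^k))` with constant stepsize `λ > 0`, `ν`-Lipschitz
`G`-bounded gradients, `η = ‖W - (1/m)𝟙𝟙ᵀ‖ ∈ (0,1)`, and noise satisfying `‖N^l‖ ≤ T`
 for all `l ≤ k-1`, the deviation `q^k = (1/m)∑ g_i^k - ∇F(x̄^k)` satisfies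
`‖q^k‖ ≤ (νη^k/√m)‖x^0 - x̄^0 ⊗ 𝟙‖ + (νλ/√m)((1-η^k)/(1-η))(√m G + T)`. -/
theorem constant_stepsize_deviation_bound
    {m d : ℕ} (hm : 0 < m)
    (W : Matrix (Fin m) (Fin m) ℝ)
    (hWsymm : W.IsSymm)
    (hWnonneg : ∀ i j, 0 ≤ W i j)
    (hWrow : W *ᵥ (fun _ => (1 : ℝ)) = fun _ => 1)
    (hWcol : (fun _ => (1 : ℝ)) ᵥ* W = fun _ => 1)
    (η : ℝ)
    (hη : η = ‖Matrix.toEuclideanCLM (𝕜 := ℝ) (n := Fin m)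
        (W - (m : ℝ)⁻¹ • Matrix.of (fun _ _ => (1 : ℝ)))‖)
    (hη0 : 0 < η) (hη1 : η < 1)
    (f : Fin m → EuclideanSpace ℝ (Fin d) → ℝ)
    (hdiff : ∀ i, Differentiable ℝ (f i))
    (ν G : ℝ≥0)
    (hLip : ∀ i, LipschitzWith ν (gradient (f i)))
    (hG : ∀ i θ, ‖gradient (f i) θ‖ ≤ (G : ℝ))
    (lam : ℝ) (hlam : 0 < lam)
    (N : ℕ → Fin m → EuclideanSpace ℝ (Fin d))
    (x : ℕ → Fin m → EuclideanSpace ℝ (Fin d))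
    (hx : ∀ k i, x (k + 1) i =
      ∑ j, W i j • (x k j - lam • (gradient (f j) (x k j) + N k j)))
    (k : ℕ) (T : ℝ)
    (hN : ∀ l < k, stackedNorm (N l) ≤ T) :
    ‖(m : ℝ)⁻¹ • ∑ i, gradient (f i) (x k i)
        - gradient (fun θ => (m : ℝ)⁻¹ * ∑ i, f i θ) ((m : ℝ)⁻¹ • ∑ i', x k i')‖
      ≤ ((ν : ℝ) * η ^ k / Real.sqrt m) *
          stackedNorm (fun i => x 0 i - (m : ℝ)⁻¹ • ∑ i', x 0 i')
        + ((ν : ℝ) * lam / Real.sqrt m) * ((1 - η ^ k) / (1 - η)) *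
          (Real.sqrt m * (G : ℝ) + T) :=
  constant_stepsize_deviation_bound_general W hWrow hWcol η hη hη1 f hdiff ν G hLip hG lam hlam N x
    hx k T hN
end
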